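/- arXiv:1405.6057 — 5 statements merged into one kernel-verified Lean document; each statement's English description precedes it below -/
import Mathlib

section
/- If Y has the maximum extreme value distribution with location μ ∈ ℝ and dispersion σ > 0, its mean is μ + ℰσ, where ℰ is the Euler–Mascheroni constant: ∫_ℝ y · (1/σ) exp(-(y-μ)/σ) exp(-exp(-(y-μ)/σ)) dy = μ + ℰσ. -/
/-!
The substitution `y = μ - σ log t` maps `(0, ∞)` onto `ℝ` and turns the Gumbel density into
`exp (-t) dt`, so the mean becomes `μ ∫ exp (-t) - σ ∫ log t exp (-t)` over `(0, ∞)`.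
The last integral is `Γ'(1) = -γ`, obtained by differentiating the Gamma integral under the
integral sign.
-/

open MeasureTheory Real Set Filter Asymptotics

lemma integrableOn_log_mul_exp_neg_Ioi :
    IntegrableOn (fun t : ℝ => log t * exp (-t)) (Ioi 0) := by
  -- the integrability half of Mellin differentiation of `exp (-t)` at `s = 1`
  have hexp_cont : Continuous fun t : ℝ => (exp (-t) : ℂ) := by fun_prop
  obtain ⟨hconv, -⟩ := mellin_hasDerivAt_of_isBigO_rpow (s := 1) (b := 0)
    (f := fun t : ℝ => (exp (-t) : ℂ))
    (hexp_cont.continuousOn.locallyIntegrableOn measurableSet_Ioi)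
    (by
      rw [← isBigO_norm_left]
      simpa only [Complex.norm_real, norm_eq_abs, abs_exp, neg_one_mul] using
        (isLittleO_exp_neg_mul_rpow_atTop zero_lt_one _).isBigO)
    (lt_add_one _)
    (by
      simp_rw [neg_zero, rpow_zero]
      exact isBigO_const_of_tendsto (y := (1 : ℂ))
        (by simpa using (hexp_cont.tendsto 0).mono_left nhdsWithin_le_nhds) one_ne_zero)
    (by simp)
  refine IntegrableOn.congr_fun hconv.re (fun t _ => ?_) measurableSet_Ioi
  simp [-Complex.ofReal_exp]

lemma integral_log_mul_exp_neg_Ioi :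
    ∫ t in Ioi (0 : ℝ), log t * exp (-t) = -eulerMascheroniConstant := by
  have hC : HasDerivAt Complex.Gamma (∫ t in Ioi (0 : ℝ), log t * exp (-t) : ℝ) 1 := by
    have h := Complex.hasDerivAt_GammaIntegral (s := 1) (by simp)
    have h' :
        HasDerivAt Complex.GammaIntegral (∫ t in Ioi (0 : ℝ), log t * exp (-t) : ℝ) 1 := by
      rw [← integral_complex_ofReal]
      simpa using h
    refine h'.congr_of_eventuallyEq ?_
    filter_upwards [(Complex.continuous_re.isOpen_preimage _ isOpen_Ioi).mem_nhds
      (by simp : (1 : ℂ) ∈ Complex.re ⁻¹' Ioi 0)] with z hz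
    exact Complex.Gamma_eq_integral hz
  have hR : HasDerivAt Gamma (∫ t in Ioi (0 : ℝ), log t * exp (-t)) 1 := by
    simpa [Complex.Gamma_ofReal] using hC.real_of_complex
  exact hR.unique hasDerivAt_Gamma_one

lemma integral_eq_setIntegral_Ioi_comp_sub_mul_log {E : Type*} [NormedAddCommGroup E]
    [NormedSpace ℝ E] (f : ℝ → E) (μ : ℝ) {σ : ℝ} (hσ : σ ≠ 0) :
    ∫ y, f y = ∫ t in Ioi 0, (|σ| / t) • f (μ - σ * log t) := by
  have himage : (fun t => μ - σ * log t) '' Ioi 0 = univ := by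
    refine eq_univ_of_forall fun y => ⟨exp ((μ - y) / σ), exp_pos _, ?_⟩
    simp only [log_exp]
    field_simp
    ring
  have hderiv : ∀ t ∈ Ioi (0 : ℝ),
      HasDerivWithinAt (fun t => μ - σ * log t) (-σ / t) (Ioi 0) t := fun t ht => by
    simpa [neg_div, div_eq_mul_inv] using
      (((hasDerivAt_log (ne_of_gt ht)).const_mul σ).const_sub μ).hasDerivWithinAt
  have hinj : InjOn (fun t => μ - σ * log t) (Ioi 0) := fun a ha b hb hab =>
    log_injOn_pos ha hb (mul_left_cancel₀ hσ (sub_right_injective hab))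
  rw [← setIntegral_univ, ← himage,
    integral_image_eq_integral_abs_deriv_smul measurableSet_Ioi hderiv hinj]
  refine setIntegral_congr_fun measurableSet_Ioi fun t (ht : 0 < t) => ?_
  rw [abs_div, abs_neg, abs_of_pos ht]

/-- The mean of the maximum extreme value (Gumbel) distribution with location `μ` and
dispersion `σ > 0` is `μ + ℰ σ`, where `ℰ` is the Euler–Mascheroni constant. -/
theorem gumbel_max_mean (μ σ : ℝ) (hσ : 0 < σ) :
    ∫ y : ℝ, y * ((1 / σ) * Real.exp (-((y - μ) / σ)) * Real.exp (-Real.exp (-((y - μ) / σ)))) =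
      μ + Real.eulerMascheroniConstant * σ := by
  rw [integral_eq_setIntegral_Ioi_comp_sub_mul_log _ μ hσ.ne']
  have hsubst : ∀ t ∈ Ioi (0 : ℝ), (|σ| / t) • ((μ - σ * log t) * ((1 / σ) *
      exp (-((μ - σ * log t - μ) / σ)) * exp (-exp (-((μ - σ * log t - μ) / σ))))) =
      μ * exp (-t) - σ * (log t * exp (-t)) := fun t (ht : 0 < t) => by
    have hlog : -((μ - σ * log t - μ) / σ) = log t := by field_simp; ring
    rw [hlog, exp_log ht, abs_of_pos hσ, smul_eq_mul]
    field_simp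
  rw [setIntegral_congr_fun measurableSet_Ioi hsubst,
    integral_sub ((integrableOn_exp_neg_Ioi 0).const_mul μ)
      (integrableOn_log_mul_exp_neg_Ioi.const_mul σ),
    integral_const_mul, integral_const_mul, integral_exp_neg_Ioi_zero,
    integral_log_mul_exp_neg_Ioi]
  ring
end

section
/- For every real s > -1, ∫_ℝ z² · exp(-s·z) · exp(-z) exp(-exp(-z)) dz = Γ''(1+s), where Γ'' is the second derivative of the Gamma function. -/
/-!
Differentiating a Mellin transform in `s` multiplies the integrand by `log t`, so for `x > 0`,
`Γ⁽ᵏ⁾(x) = ∫₀^∞ t^(x-1) (log t)^k e^(-t) dt`. The substitution `t = e^(-z)` turns this, at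
`x = 1 + s`, into the `k`-th moment of `-z` against `e^(-s z)` times the Gumbel density.
-/

open MeasureTheory Real Set Filter Asymptotics Topology

theorem isBigO_log_pow_mul_exp_neg_atTop (n : ℕ) (a : ℝ) :
    (fun t => log t ^ n * exp (-t)) =O[atTop] (· ^ (-a)) := by
  induction n generalizing a with
  | zero => simpa using (isLittleO_exp_neg_mul_rpow_atTop one_pos (-a)).isBigO
  | succ n ih =>
    refine (isBigO_rpow_top_log_smul (lt_add_one a) (ih (a + 1))).congr_left fun t => ?_
    simp only [smul_eq_mul]; ring

theorem isBigO_log_pow_mul_exp_neg_nhdsGT_zero (n : ℕ) {b : ℝ} (hb : 0 < b) :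
    (fun t => log t ^ n * exp (-t)) =O[𝓝[>] 0] (· ^ (-b)) := by
  induction n generalizing b with
  | zero =>
    refine IsBigO.of_bound 1 ?_
    filter_upwards [Ioc_mem_nhdsGT one_pos] with t ⟨ht0, ht1⟩
    rw [pow_zero, one_mul, norm_of_nonneg (exp_pos _).le, norm_of_nonneg (rpow_nonneg ht0.le _),
      one_mul]
    exact (exp_le_one_iff.2 (neg_nonpos.2 ht0.le)).trans
      (one_le_rpow_of_pos_of_le_one_of_nonpos ht0 ht1 (neg_nonpos.2 hb.le))
  | succ n ih =>
    refine (isBigO_rpow_zero_log_smul (half_lt_self hb) (ih (half_pos hb))).congr_left fun t => ?_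
    simp only [smul_eq_mul]; ring

theorem hasDerivAt_mellin_log_pow_mul_exp_neg (n : ℕ) {s : ℂ} (hs : 0 < s.re) :
    HasDerivAt (mellin fun t => ((log t ^ n * exp (-t) : ℝ) : ℂ))
      (mellin (fun t => ((log t ^ (n + 1) * exp (-t) : ℝ) : ℂ)) s) s := by
  have hcont : ContinuousOn (fun t => ((log t ^ n * exp (-t) : ℝ) : ℂ)) (Ioi 0) :=
    Complex.continuous_ofReal.comp_continuousOn <|
      ((continuousOn_log.mono fun _ ht => ne_of_gt ht).pow n).mul (by fun_prop)
  have hlog_smul : (fun t => log t • ((log t ^ n * exp (-t) : ℝ) : ℂ)) =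
      fun t => ((log t ^ (n + 1) * exp (-t) : ℝ) : ℂ) := by
    ext t; rw [Complex.real_smul]; push_cast; ring
  rw [← hlog_smul]
  exact (mellin_hasDerivAt_of_isBigO_rpow (hcont.locallyIntegrableOn measurableSet_Ioi)
    (Complex.isBigO_ofReal_left.2 (isBigO_log_pow_mul_exp_neg_atTop n (s.re + 1))) (lt_add_one _)
    (Complex.isBigO_ofReal_left.2 (isBigO_log_pow_mul_exp_neg_nhdsGT_zero n (half_pos hs)))
    (half_lt_self hs)).2

theorem mellin_ofReal (f : ℝ → ℝ) (x : ℝ) :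
    mellin (fun t => (f t : ℂ)) x = ((∫ t in Ioi 0, t ^ (x - 1) * f t : ℝ) : ℂ) := by
  rw [mellin, ← integral_complex_ofReal]
  refine setIntegral_congr_fun measurableSet_Ioi fun t (ht : 0 < t) => ?_
  rw [smul_eq_mul, Complex.ofReal_mul, Complex.ofReal_cpow ht.le]
  push_cast; rfl

theorem Real.iteratedDeriv_Gamma (k : ℕ) {x : ℝ} (hx : 0 < x) :
    iteratedDeriv k Gamma x = ∫ t in Ioi 0, t ^ (x - 1) * (log t ^ k * exp (-t)) := by
  rw [← Complex.ofReal_re (∫ t in Ioi 0, _), ← mellin_ofReal]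
  induction k generalizing x with
  | zero =>
    rw [iteratedDeriv_zero, mellin_ofReal, Complex.ofReal_re, Real.Gamma_eq_integral hx]
    simp only [pow_zero, one_mul, mul_comm]
  | succ k ih =>
    have hderiv := (hasDerivAt_mellin_log_pow_mul_exp_neg k (s := x) (by simpa)).real_of_complex
    rw [iteratedDeriv_succ, ← hderiv.deriv]
    refine Filter.EventuallyEq.deriv_eq ?_
    filter_upwards [Ioi_mem_nhds hx] with y hy using ih hy

theorem integral_Ioi_zero_eq_integral_exp_neg {E : Type*} [NormedAddCommGroup E] [NormedSpace ℝ E]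
    (g : ℝ → E) : ∫ t in Ioi 0, g t = ∫ u, exp (-u) • g (exp (-u)) := by
  have himage : (fun u => exp (-u)) '' univ = Ioi 0 := by
    rw [image_univ, ← range_exp]; exact neg_surjective.range_comp exp
  have hderiv (u : ℝ) : HasDerivAt (fun u => exp (-u)) (-exp (-u)) u := by
    simpa using (hasDerivAt_neg u).exp
  rw [← himage, integral_image_eq_integral_abs_deriv_smul MeasurableSet.univ
    (fun u _ => (hderiv u).hasDerivWithinAt) (fun u _ v _ h => neg_injective (exp_injective h)),
    Measure.restrict_univ]
  simp_rw [abs_neg, abs_of_pos (exp_pos _)]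

theorem integral_neg_pow_mul_exp_mul_gumbel (k : ℕ) {s : ℝ} (hs : -1 < s) :
    ∫ z, (-z) ^ k * exp (-(s * z)) * (exp (-z) * exp (-exp (-z))) =
      iteratedDeriv k Gamma (1 + s) := by
  rw [Real.iteratedDeriv_Gamma k (by linarith), integral_Ioi_zero_eq_integral_exp_neg]
  congr 1 with z
  rw [smul_eq_mul, log_exp, ← exp_mul, show -z * (1 + s - 1) = -(s * z) by ring]
  ring

/-- For `s > -1`, the integral of `z² exp(-s z)` against the standard Gumbel density
`exp(-z) exp(-exp(-z))` equals `Γ''(1+s)`. -/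
theorem standard_gumbel_sq_weighted_exp_moment (s : ℝ) (hs : -1 < s) :
    ∫ z : ℝ, z ^ 2 * Real.exp (-(s * z)) * (Real.exp (-z) * Real.exp (-Real.exp (-z))) =
      deriv (deriv Real.Gamma) (1 + s) := by
  simpa only [even_two.neg_pow, iteratedDeriv_succ, iteratedDeriv_zero] using
    integral_neg_pow_mul_exp_mul_gumbel 2 hs
end

section
/- For all μ ∈ ℝ and σ > 0, the score with respect to the dispersion parameter of the maximum extreme value distribution has zero mean: ∫_ℝ (1/σ)(-1 + z - z·exp(-z)) · (1/σ) exp(-z) exp(-exp(-z)) dy = 0, where z = (y-μ)/σ. -/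
/-!
Writing `g(z) = exp (-z) exp (-exp (-z))` for the standard Gumbel density, `g' = (exp (-z) - 1) g`,
so the integrand in the standard variable `z` is exactly the derivative of `-z g(z)`. Since `z g(z)`
vanishes at both ends of the line, its derivative integrates to zero. The general location and
dispersion reduce to the standard case by the affine substitution `z = (y - μ) / σ`.
-/

open MeasureTheory Real Filter Topology

/-- When `f'` is not integrable this holds by the junk value of the Bochner integral. -/
theorem integral_eq_zero_of_hasDerivAt_of_tendsto_zero {E : Type*} [NormedAddCommGroup E]
    [NormedSpace ℝ E] [CompleteSpace E] {f f' : ℝ → E} (hderiv : ∀ x, HasDerivAt f (f' x) x)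
    (hbot : Tendsto f atBot (𝓝 0)) (htop : Tendsto f atTop (𝓝 0)) : ∫ x, f' x = 0 := by
  by_cases hf' : Integrable f'
  · simpa using integral_of_hasDerivAt_of_tendsto hderiv hf' hbot htop
  · exact integral_undef hf'

noncomputable def gumbelPDF (z : ℝ) : ℝ := exp (-z) * exp (-exp (-z))

theorem hasDerivAt_gumbelPDF (z : ℝ) :
    HasDerivAt gumbelPDF ((exp (-z) - 1) * gumbelPDF z) z := by
  have hexp : HasDerivAt (fun z : ℝ => exp (-z)) (-exp (-z)) z := by
    simpa using (hasDerivAt_neg z).exp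
  exact (hexp.mul hexp.neg.exp).congr_deriv (by simp only [gumbelPDF, Pi.neg_apply]; ring)

theorem hasDerivAt_neg_mul_gumbelPDF (z : ℝ) :
    HasDerivAt (fun z => -(z * gumbelPDF z))
      ((-1 + z - z * exp (-z)) * gumbelPDF z) z :=
  ((hasDerivAt_id z).mul (hasDerivAt_gumbelPDF z)).neg.congr_deriv (by simp only [id_eq]; ring)

theorem tendsto_mul_gumbelPDF_atTop : Tendsto (fun z => z * gumbelPDF z) atTop (𝓝 0) := by
  have hdecay : Tendsto (fun z : ℝ => z * exp (-z)) atTop (𝓝 0) := by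
    simpa using tendsto_pow_mul_exp_neg_atTop_nhds_zero 1
  have hfactor : Tendsto (fun z : ℝ => exp (-exp (-z))) atTop (𝓝 1) := by
    simpa using tendsto_exp_neg_atTop_nhds_zero.neg.rexp
  simpa [gumbelPDF, mul_assoc] using hdecay.mul hfactor

/-- With `t = exp (-z) → ∞` as `z → -∞`: `|z| ≤ t`, so `|z g(z)| ≤ t² exp (-t)`. -/
theorem tendsto_mul_gumbelPDF_atBot : Tendsto (fun z => z * gumbelPDF z) atBot (𝓝 0) := by
  have hexp : Tendsto (fun z : ℝ => exp (-z)) atBot atTop :=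
    tendsto_exp_atTop.comp tendsto_neg_atBot_atTop
  have hbound : Tendsto (fun z : ℝ => exp (-z) ^ 2 * exp (-exp (-z))) atBot (𝓝 0) :=
    (tendsto_pow_mul_exp_neg_atTop_nhds_zero 2).comp hexp
  refine squeeze_zero_norm' ?_ hbound
  filter_upwards [eventually_le_atBot 0] with z hz
  have habs : |z| ≤ exp (-z) := by
    rw [abs_of_nonpos hz]
    linarith [add_one_le_exp (-z)]
  rw [norm_mul, norm_eq_abs, gumbelPDF, norm_of_nonneg (by positivity), pow_two, mul_assoc]
  gcongr

theorem integral_gumbel_score_mul_gumbelPDF :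
    ∫ z, (-1 + z - z * exp (-z)) * gumbelPDF z = 0 :=
  integral_eq_zero_of_hasDerivAt_of_tendsto_zero hasDerivAt_neg_mul_gumbelPDF
    (by simpa using tendsto_mul_gumbelPDF_atBot.neg)
    (by simpa using tendsto_mul_gumbelPDF_atTop.neg)

theorem gumbel_max_dispersion_score_mean_zero_general (μ σ : ℝ) :
    ∫ y : ℝ,
        (1 / σ) * (-1 + (y - μ) / σ - ((y - μ) / σ) * Real.exp (-((y - μ) / σ))) *
          ((1 / σ) * Real.exp (-((y - μ) / σ)) * Real.exp (-Real.exp (-((y - μ) / σ)))) = 0 := by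
  set h : ℝ → ℝ := fun z => (-1 + z - z * exp (-z)) * gumbelPDF z
  have hintegrand : ∀ y,
      (1 / σ) * (-1 + (y - μ) / σ - ((y - μ) / σ) * exp (-((y - μ) / σ))) *
        ((1 / σ) * exp (-((y - μ) / σ)) * exp (-exp (-((y - μ) / σ)))) =
      (1 / σ) ^ 2 * h ((y - μ) / σ) := fun y => by
    simp only [h, gumbelPDF]
    ring
  simp_rw [hintegrand, integral_const_mul]
  rw [integral_sub_right_eq_self (fun y => h (y / σ)), Measure.integral_comp_div,
    integral_gumbel_score_mul_gumbelPDF, smul_zero, mul_zero]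

/-- The score with respect to the dispersion parameter of the maximum extreme value
distribution has zero mean. -/
theorem gumbel_max_dispersion_score_mean_zero (μ σ : ℝ) (hσ : 0 < σ) :
    ∫ y : ℝ,
        (1 / σ) * (-1 + (y - μ) / σ - ((y - μ) / σ) * Real.exp (-((y - μ) / σ))) *
          ((1 / σ) * Real.exp (-((y - μ) / σ)) * Real.exp (-Real.exp (-((y - μ) / σ)))) = 0 :=
  gumbel_max_dispersion_score_mean_zero_general μ σ
end

section
/- For all μ ∈ ℝ and σ > 0, the cross Fisher information between the location and dispersion parameters of the maximum extreme value distribution equals (ℰ - 1)/σ²: ∫_ℝ (1/σ)(1 - exp(-z)) · (1/σ)(-1 + z - z·exp(-z)) · (1/σ) exp(-z) exp(-exp(-z)) dy = (ℰ - 1)/σ², where z = (y-μ)/σ and ℰ is the Euler–Mascheroni constant. -/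
/-!
Standardizing `z = (y - μ)/σ` pulls out the factor `1/σ²`. The substitution `t = exp (-z)`
turns the standard integrand into `(1 - t) * (-1 - (1 - t) * log t) * exp (-t)` on `(0, ∞)`,
a combination of the moments `∫ tⁿ e⁻ᵗ = Γ(n + 1) = n!` and of the log-moments
`∫ tⁿ log t e⁻ᵗ = Γ'(n + 1) = n! (Hₙ - ℰ)`. They add up to
`(1! - 0!) - (Γ'(1) - 2 Γ'(2) + Γ'(3)) = 0 - (1 - ℰ)`.
-/

open MeasureTheory Real Set

lemma abs_log_le_rpow_add_rpow_neg_div {t ε : ℝ} (ht : 0 < t) (hε : 0 < ε) :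
    |log t| ≤ (t ^ ε + t ^ (-ε)) / ε := by
  have hlog_inv : -log t ≤ t ^ (-ε) / ε := by
    rw [← log_inv, rpow_neg ht.le, ← inv_rpow ht.le]
    exact log_le_rpow_div (inv_nonneg.2 ht.le) hε
  have : 0 ≤ t ^ ε / ε := by positivity
  have : 0 ≤ t ^ (-ε) / ε := by positivity
  rw [add_div, abs_le]
  constructor <;> linarith [log_le_rpow_div ht.le hε]

lemma integrableOn_rpow_mul_log_mul_exp_neg {s : ℝ} (hs : 0 < s) :
    IntegrableOn (fun t ↦ t ^ (s - 1) * log t * exp (-t)) (Ioi 0) := by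
  obtain ⟨ε, hε, hεs⟩ : ∃ ε, 0 < ε ∧ ε < s := ⟨s / 2, by positivity, by linarith⟩
  have hdom : IntegrableOn
      (fun t ↦ (exp (-t) * t ^ (s + ε - 1) + exp (-t) * t ^ (s - ε - 1)) / ε) (Ioi 0) :=
    ((GammaIntegral_convergent (by positivity)).add
      (GammaIntegral_convergent (by linarith))).div_const ε
  refine hdom.mono' (by fun_prop) (ae_restrict_of_forall_mem measurableSet_Ioi fun t ht ↦ ?_)
  have ht : 0 < t := ht
  calc ‖t ^ (s - 1) * log t * exp (-t)‖ = t ^ (s - 1) * |log t| * exp (-t) := by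
        rw [norm_mul, norm_mul, norm_eq_abs, norm_eq_abs, norm_eq_abs,
          abs_of_pos (rpow_pos_of_pos ht _), abs_of_pos (exp_pos _)]
    _ ≤ t ^ (s - 1) * ((t ^ ε + t ^ (-ε)) / ε) * exp (-t) := by
        gcongr
        exact abs_log_le_rpow_add_rpow_neg_div ht hε
    _ = (exp (-t) * t ^ (s + ε - 1) + exp (-t) * t ^ (s - ε - 1)) / ε := by
        rw [show s + ε - 1 = (s - 1) + ε by ring, show s - ε - 1 = (s - 1) + -ε by ring,
          rpow_add ht, rpow_add ht]
        ring

lemma hasDerivAt_Gamma_of_pos {s : ℝ} (hs : 0 < s) :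
    HasDerivAt Gamma (∫ t in Ioi 0, t ^ (s - 1) * log t * exp (-t)) s := by
  have hs' : 0 < (s : ℂ).re := by simpa using hs
  have hGamma : Complex.Gamma =ᶠ[nhds (s : ℂ)] Complex.GammaIntegral := by
    filter_upwards [Complex.continuous_re.continuousAt.eventually (lt_mem_nhds hs')] with z hz
    exact Complex.Gamma_eq_integral hz
  have hC := (Complex.hasDerivAt_GammaIntegral hs').congr_of_eventuallyEq hGamma
  refine hC.real_of_complex.congr_deriv ?_
  rw [← Complex.ofReal_re (∫ t in Ioi 0, _), ← integral_complex_ofReal]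
  congr 1
  refine setIntegral_congr_fun measurableSet_Ioi fun t ht ↦ ?_
  simp only [Complex.ofReal_mul, Complex.ofReal_cpow (le_of_lt ht), Complex.ofReal_sub,
    Complex.ofReal_one]
  ring

lemma integrableOn_pow_mul_exp_neg (n : ℕ) :
    IntegrableOn (fun t ↦ t ^ n * exp (-t)) (Ioi 0) := by
  simpa [mul_comm] using GammaIntegral_convergent (s := n + 1) (by positivity)

lemma integral_pow_mul_exp_neg (n : ℕ) : ∫ t in Ioi 0, t ^ n * exp (-t) = n.factorial := by
  simpa [mul_comm] using
    (Gamma_eq_integral (s := n + 1) (by positivity)).symm.trans (Gamma_nat_eq_factorial n)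

lemma integrableOn_pow_mul_log_mul_exp_neg (n : ℕ) :
    IntegrableOn (fun t ↦ t ^ n * log t * exp (-t)) (Ioi 0) := by
  simpa using integrableOn_rpow_mul_log_mul_exp_neg (s := n + 1) (by positivity)

lemma integral_pow_mul_log_mul_exp_neg (n : ℕ) :
    ∫ t in Ioi 0, t ^ n * log t * exp (-t) =
      n.factorial * (harmonic n - eulerMascheroniConstant) := by
  have h := (hasDerivAt_Gamma_of_pos (s := n + 1) (by positivity)).unique (hasDerivAt_Gamma_nat n)
  simpa [neg_add_eq_sub] using h

lemma integral_one_sub_mul_neg_one_sub_mul_log_mul_exp_neg :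
    ∫ t in Ioi 0, (1 - t) * (-1 - (1 - t) * log t) * exp (-t) =
      eulerMascheroniConstant - 1 := by
  have hexpand : (fun t : ℝ ↦ (1 - t) * (-1 - (1 - t) * log t) * exp (-t)) = fun t ↦
      (t ^ 1 * exp (-t) - t ^ 0 * exp (-t)) - (t ^ 0 * log t * exp (-t)
        - 2 * (t ^ 1 * log t * exp (-t)) + t ^ 2 * log t * exp (-t)) := by
    ext t
    ring
  have hE := integrableOn_pow_mul_exp_neg
  have hL := integrableOn_pow_mul_log_mul_exp_neg
  rw [hexpand, integral_sub, integral_sub, integral_add, integral_sub, integral_const_mul]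
  · simp only [integral_pow_mul_exp_neg, integral_pow_mul_log_mul_exp_neg]
    norm_num [harmonic_succ]
    ring
  exacts [hL 0, (hL 1).const_mul 2, (hL 0).sub ((hL 1).const_mul 2), hL 2, hE 1, hE 0,
    (hE 1).sub (hE 0), ((hL 0).sub ((hL 1).const_mul 2)).add (hL 2)]

lemma integral_exp_neg_smul_comp_exp_neg {E : Type*} [NormedAddCommGroup E] [NormedSpace ℝ E]
    (f : ℝ → E) : ∫ z, exp (-z) • f (exp (-z)) = ∫ t in Ioi 0, f t := by
  have himage : (fun z ↦ exp (-z)) '' univ = Ioi 0 := by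
    rw [image_univ, ← range_exp]
    exact neg_surjective.range_comp exp
  rw [← himage, integral_image_eq_integral_abs_deriv_smul MeasurableSet.univ
    (fun z _ ↦ (hasDerivAt_neg z).exp.hasDerivWithinAt) (exp_injective.comp neg_injective).injOn,
    setIntegral_univ]
  simp

lemma integral_standard_gumbel_cross_score :
    ∫ z, (1 - exp (-z)) * (-1 + z - z * exp (-z)) * (exp (-z) * exp (-exp (-z))) =
      eulerMascheroniConstant - 1 := by
  have hsubst : ∀ z : ℝ,
      (1 - exp (-z)) * (-1 + z - z * exp (-z)) * (exp (-z) * exp (-exp (-z))) =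
        exp (-z) • ((1 - exp (-z)) * (-1 - (1 - exp (-z)) * log (exp (-z))) *
          exp (-exp (-z))) := by
    intro z
    rw [log_exp, smul_eq_mul]
    ring
  simp_rw [hsubst]
  exact (integral_exp_neg_smul_comp_exp_neg
    fun t ↦ (1 - t) * (-1 - (1 - t) * log t) * exp (-t)).trans
    integral_one_sub_mul_neg_one_sub_mul_log_mul_exp_neg

/-- The cross Fisher information between the location and dispersion parameters of the
maximum extreme value distribution equals `(ℰ - 1)/σ²`, with `ℰ` the Euler–Mascheroni
constant. -/
theorem gumbel_max_cross_fisher_information (μ σ : ℝ) (hσ : 0 < σ) :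
    ∫ y : ℝ,
        (1 / σ) * (1 - Real.exp (-((y - μ) / σ))) *
          ((1 / σ) * (-1 + (y - μ) / σ - ((y - μ) / σ) * Real.exp (-((y - μ) / σ)))) *
          ((1 / σ) * Real.exp (-((y - μ) / σ)) * Real.exp (-Real.exp (-((y - μ) / σ)))) =
      (Real.eulerMascheroniConstant - 1) / σ ^ 2 := by
  set g : ℝ → ℝ := fun z ↦
    (1 - exp (-z)) * (-1 + z - z * exp (-z)) * (exp (-z) * exp (-exp (-z))) with hg
  have hstandardize : ∀ y,
      (1 / σ) * (1 - Real.exp (-((y - μ) / σ))) *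
          ((1 / σ) * (-1 + (y - μ) / σ - ((y - μ) / σ) * Real.exp (-((y - μ) / σ)))) *
          ((1 / σ) * Real.exp (-((y - μ) / σ)) * Real.exp (-Real.exp (-((y - μ) / σ)))) =
        σ⁻¹ ^ 3 * g ((y - μ) / σ) := fun y ↦ by
    rw [hg]
    ring
  simp_rw [hstandardize]
  rw [integral_const_mul, integral_sub_right_eq_self (fun u ↦ g (u / σ)) μ,
    Measure.integral_comp_div, hg, integral_standard_gumbel_cross_score, abs_of_pos hσ,
    smul_eq_mul]
  field_simp
end

section
/- Let Y have the maximum extreme value distribution with location μ₁ ∈ ℝ and dispersion σ₁ > 0, and let μ₂ ∈ ℝ and σ₂ > 0. Then ∫_ℝ (1 - exp(-(y-μ₁)/σ₁)) · (1 - exp(-(y-μ₂)/σ₂)) · (1/σ₁) exp(-(y-μ₁)/σ₁) exp(-exp(-(y-μ₁)/σ₁)) dy = (σ₁/σ₂) · Γ(1 + σ₁/σ₂) · exp(-(μ₁-μ₂)/σ₂), where Γ is the Gamma function. -/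
/-!
The substitution `t = exp (-(y - μ₁) / σ₁)` carries the Gumbel density onto `exp (-t) dt` on
`(0, ∞)` and turns the second score factor into `1 - c * t ^ s` with `s = σ₁ / σ₂` and
`c = exp (-(μ₁ - μ₂) / σ₂)`. What remains are the integrals
`∫ (1 - t) t ^ s exp (-t) dt = Γ(s + 1) - Γ(s + 2) = -s Γ(s + 1)`, which vanish at `s = 0`.
-/

open MeasureTheory Real Set

theorem integral_exp_smul_comp_exp {E : Type*} [NormedAddCommGroup E] [NormedSpace ℝ E]
    (g : ℝ → E) : ∫ x, exp x • g (exp x) = ∫ t in Ioi 0, g t := by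
  have := integral_image_eq_integral_abs_deriv_smul MeasurableSet.univ
    (fun x _ => (hasDerivAt_exp x).hasDerivWithinAt) exp_injective.injOn g
  rw [image_univ, range_exp, Measure.restrict_univ] at this
  simpa [abs_of_pos (exp_pos _)] using this.symm

theorem integral_gumbel_density_smul_comp {E : Type*} [NormedAddCommGroup E] [NormedSpace ℝ E]
    (μ : ℝ) {σ : ℝ} (hσ : 0 < σ) (g : ℝ → E) :
    ∫ y, ((1 / σ) * exp (-((y - μ) / σ))) • g (exp (-((y - μ) / σ))) = ∫ t in Ioi 0, g t := by
  let h : ℝ → E := fun u => exp (-u) • g (exp (-u))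
  calc ∫ y, ((1 / σ) * exp (-((y - μ) / σ))) • g (exp (-((y - μ) / σ)))
      = (1 / σ) • ∫ y, h ((y - μ) / σ) := by
        rw [← integral_smul]; simp only [h, smul_smul]
    _ = ∫ u, h u := by
        rw [integral_sub_right_eq_self (fun y => h (y / σ)), Measure.integral_comp_div,
          abs_of_pos hσ, smul_smul, one_div_mul_cancel hσ.ne', one_smul]
    _ = ∫ t in Ioi 0, g t := by
        rw [← integral_neg_eq_self h]
        simpa only [h, neg_neg] using integral_exp_smul_comp_exp g

theorem exp_neg_div_eq_mul_rpow (y μ₁ μ₂ : ℝ) {σ₁ : ℝ} (hσ₁ : σ₁ ≠ 0) (σ₂ : ℝ) :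
    exp (-((y - μ₂) / σ₂)) = exp (-((μ₁ - μ₂) / σ₂)) * exp (-((y - μ₁) / σ₁)) ^ (σ₁ / σ₂) := by
  rw [← exp_mul, ← exp_add]
  congr 1
  field_simp
  ring

theorem one_sub_mul_rpow_mul_exp_neg_eq {t : ℝ} (ht : 0 < t) (s : ℝ) :
    (1 - t) * t ^ s * exp (-t) = exp (-t) * t ^ (s + 1 - 1) - exp (-t) * t ^ (s + 2 - 1) := by
  rw [show s + 1 - 1 = s by ring, show s + 2 - 1 = s + 1 by ring, rpow_add_one ht.ne']
  ring

theorem integrableOn_one_sub_mul_rpow_mul_exp_neg {s : ℝ} (hs : -1 < s) :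
    IntegrableOn (fun t => (1 - t) * t ^ s * exp (-t)) (Ioi 0) :=
  ((GammaIntegral_convergent (by linarith)).sub (GammaIntegral_convergent (by linarith))).congr_fun
    (fun t ht => (one_sub_mul_rpow_mul_exp_neg_eq ht s).symm) measurableSet_Ioi

theorem integral_one_sub_mul_rpow_mul_exp_neg {s : ℝ} (hs : -1 < s) :
    ∫ t in Ioi 0, (1 - t) * t ^ s * exp (-t) = -s * Gamma (s + 1) := by
  rw [setIntegral_congr_fun measurableSet_Ioi fun t ht => one_sub_mul_rpow_mul_exp_neg_eq ht s,
    integral_sub (GammaIntegral_convergent (by linarith)) (GammaIntegral_convergent (by linarith)),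
    ← Gamma_eq_integral (by linarith), ← Gamma_eq_integral (by linarith),
    show s + 2 = s + 1 + 1 by ring, Gamma_add_one (s := s + 1) (by linarith)]
  ring

/-- Covariance-type expectation of location scores at two parameter points under the maximum
extreme value distribution with parameters `(μ₁, σ₁)`:
`E[(1 - e^{-(Y-μ₁)/σ₁})(1 - e^{-(Y-μ₂)/σ₂})] = (σ₁/σ₂) Γ(1 + σ₁/σ₂) e^{-(μ₁-μ₂)/σ₂}`. -/
theorem gumbel_max_score_cross_expectation (μ₁ μ₂ σ₁ σ₂ : ℝ) (hσ₁ : 0 < σ₁) (hσ₂ : 0 < σ₂) :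
    ∫ y : ℝ,
        (1 - Real.exp (-((y - μ₁) / σ₁))) * (1 - Real.exp (-((y - μ₂) / σ₂))) *
          ((1 / σ₁) * Real.exp (-((y - μ₁) / σ₁)) * Real.exp (-Real.exp (-((y - μ₁) / σ₁)))) =
      (σ₁ / σ₂) * Real.Gamma (1 + σ₁ / σ₂) * Real.exp (-((μ₁ - μ₂) / σ₂)) := by
  set s := σ₁ / σ₂
  set c := exp (-((μ₁ - μ₂) / σ₂))
  have hs : 0 < s := div_pos hσ₁ hσ₂
  let g : ℝ → ℝ := fun t => (1 - t) * t ^ (0 : ℝ) * exp (-t) - c * ((1 - t) * t ^ s * exp (-t))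
  have hg : ∀ y, (1 - exp (-((y - μ₁) / σ₁))) * (1 - exp (-((y - μ₂) / σ₂))) *
      ((1 / σ₁) * exp (-((y - μ₁) / σ₁)) * exp (-exp (-((y - μ₁) / σ₁)))) =
      ((1 / σ₁) * exp (-((y - μ₁) / σ₁))) • g (exp (-((y - μ₁) / σ₁))) := fun y => by
    rw [exp_neg_div_eq_mul_rpow y μ₁ μ₂ hσ₁.ne' σ₂, smul_eq_mul]
    simp only [g, rpow_zero]
    ring
  simp_rw [hg]
  rw [integral_gumbel_density_smul_comp μ₁ hσ₁ g, integral_sub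
    (integrableOn_one_sub_mul_rpow_mul_exp_neg (by norm_num))
    ((integrableOn_one_sub_mul_rpow_mul_exp_neg (by linarith)).const_mul c), integral_const_mul,
    integral_one_sub_mul_rpow_mul_exp_neg (by norm_num),
    integral_one_sub_mul_rpow_mul_exp_neg (by linarith), add_comm 1 s]
  ring
end
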